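/- arXiv:2101.08364 — 2 statements merged into one kernel-verified Lean document; each statement's English description precedes it below -/
import Mathlib

section
/- Preservation of level via the CbV translation: (1) for every λ-context c, ℓv(c) = ℓ(c^v); (2) for every λ-term t and k ∈ ℕ: t →βv u at level k iff t^v →!β at level k followed by an optional →d step at level k to u^v, and t →o u at level k iff t^v →o at level k followed by an optional →d step at level k to u^v, for any o ∈ O; (3) for every λ-term t, ℓℓv(t) = ℓℓ(t^v), where ℓℓv and ℓℓ are the least levels with respect to the sets of βv- and o-redexes, resp. !β- and o-redexes. -/
namespace BangPaper

/-- λ-terms with operators `O`, each with arity `ar o`. -/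
inductive Lam (O : Type) (ar : O → ℕ) : Type
  | var : ℕ → Lam O ar
  | lam : ℕ → Lam O ar → Lam O ar
  | app : Lam O ar → Lam O ar → Lam O ar
  | op  : (o : O) → (Fin (ar o) → Lam O ar) → Lam O ar

/-- Terms of the bang calculus `Λ!O`. -/
inductive BT (O : Type) (ar : O → ℕ) : Type
  | var : ℕ → BT O ar
  | lam : ℕ → BT O ar → BT O ar
  | app : BT O ar → BT O ar → BT O ar
  | bang : BT O ar → BT O ar
  | op  : (o : O) → (Fin (ar o) → BT O ar) → BT O ar

variable {O : Type} {ar : O → ℕ}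

/-- Values: variables and abstractions. -/
def Lam.isValue : Lam O ar → Prop
  | .var _ => True
  | .lam _ _ => True
  | _ => False

/-- Substitution `t[u/x]` on λ-terms. -/
def Lam.subst : Lam O ar → ℕ → Lam O ar → Lam O ar
  | .var y, x, u => if y = x then u else .var y
  | .lam y t, x, u => if y = x then .lam y t else .lam y (Lam.subst t x u)
  | .app t s, x, u => .app (Lam.subst t x u) (Lam.subst s x u)
  | .op o ts, x, u => .op o (fun i => Lam.subst (ts i) x u)

/-- Substitution `T[S/x]` on bang-calculus terms. -/
def BT.subst : BT O ar → ℕ → BT O ar → BT O ar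
  | .var y, x, u => if y = x then u else .var y
  | .lam y t, x, u => if y = x then .lam y t else .lam y (BT.subst t x u)
  | .app t s, x, u => .app (BT.subst t x u) (BT.subst s x u)
  | .bang t, x, u => .bang (BT.subst t x u)
  | .op o ts, x, u => .op o (fun i => BT.subst (ts i) x u)

/-- One-hole contexts for λ-terms. -/
inductive LCtx (O : Type) (ar : O → ℕ) : Type
  | hole : LCtx O ar
  | lam  : ℕ → LCtx O ar → LCtx O ar
  | appL : LCtx O ar → Lam O ar → LCtx O ar
  | appR : Lam O ar → LCtx O ar → LCtx O ar
  | op   : (o : O) → (Fin (ar o) → Lam O ar) → Fin (ar o) → LCtx O ar → LCtx O ar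

/-- One-hole contexts for bang-calculus terms. -/
inductive BCtx (O : Type) (ar : O → ℕ) : Type
  | hole : BCtx O ar
  | lam  : ℕ → BCtx O ar → BCtx O ar
  | appL : BCtx O ar → BT O ar → BCtx O ar
  | appR : BT O ar → BCtx O ar → BCtx O ar
  | bang : BCtx O ar → BCtx O ar
  | op   : (o : O) → (Fin (ar o) → BT O ar) → Fin (ar o) → BCtx O ar → BCtx O ar

/-- Plugging a λ-term in a λ-context. -/
def LCtx.plug : LCtx O ar → Lam O ar → Lam O ar
  | .hole, t => t
  | .lam x c, t => .lam x (LCtx.plug c t)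
  | .appL c s, t => .app (LCtx.plug c t) s
  | .appR s c, t => .app s (LCtx.plug c t)
  | .op o ts i c, t => .op o (Function.update ts i (LCtx.plug c t))

/-- CbN level of a λ-context. -/
def LCtx.levN : LCtx O ar → ℕ
  | .hole => 0
  | .lam _ c => LCtx.levN c
  | .appL c _ => LCtx.levN c
  | .appR _ c => LCtx.levN c + 1
  | .op _ _ _ c => LCtx.levN c + 1

/-- CbV level of a λ-context. -/
def LCtx.levV : LCtx O ar → ℕ
  | .hole => 0
  | .lam _ c => LCtx.levV c + 1
  | .appL (.lam _ c') _ => LCtx.levV c'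
  | .appL c _ => LCtx.levV c
  | .appR _ c => LCtx.levV c
  | .op _ _ _ c => LCtx.levV c + 1

/-- Plugging a bang-term in a bang-context. -/
def BCtx.plug : BCtx O ar → BT O ar → BT O ar
  | .hole, t => t
  | .lam x c, t => .lam x (BCtx.plug c t)
  | .appL c s, t => .app (BCtx.plug c t) s
  | .appR s c, t => .app s (BCtx.plug c t)
  | .bang c, t => .bang (BCtx.plug c t)
  | .op o ts i c, t => .op o (Function.update ts i (BCtx.plug c t))

/-- Bang-calculus level of a context. -/
def BCtx.lev : BCtx O ar → ℕ
  | .hole => 0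
  | .lam _ c => BCtx.lev c
  | .appL c _ => BCtx.lev c
  | .appR _ c => BCtx.lev c
  | .bang c => BCtx.lev c + 1
  | .op _ _ _ c => BCtx.lev c + 1

/-- Contextual closure of a root rule on λ-terms. -/
def Lam.Step (root : Lam O ar → Lam O ar → Prop) (t s : Lam O ar) : Prop :=
  ∃ (c : LCtx O ar) (a b : Lam O ar), root a b ∧ t = c.plug a ∧ s = c.plug b

/-- Step at level `k` (w.r.t. a level function `lev` on λ-contexts). -/
def Lam.StepAt (lev : LCtx O ar → ℕ) (root : Lam O ar → Lam O ar → Prop)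
    (k : ℕ) (t s : Lam O ar) : Prop :=
  ∃ (c : LCtx O ar) (a b : Lam O ar), root a b ∧ t = c.plug a ∧ s = c.plug b ∧ lev c = k

/-- Least level of a λ-term w.r.t. a redex set `Red` and level function `lev`. -/
noncomputable def Lam.ll (lev : LCtx O ar → ℕ) (Red : Lam O ar → Prop) (t : Lam O ar) : ℕ∞ :=
  sInf { n : ℕ∞ | ∃ (c : LCtx O ar) (r : Lam O ar), Red r ∧ t = c.plug r ∧ (lev c : ℕ∞) = n }

/-- Least-level step. -/
def Lam.LLStep (lev : LCtx O ar → ℕ) (Red : Lam O ar → Prop)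
    (root : Lam O ar → Lam O ar → Prop) (t s : Lam O ar) : Prop :=
  ∃ k : ℕ, Lam.StepAt lev root k t s ∧ (k : ℕ∞) = Lam.ll lev Red t

/-- Internal (non-least-level) step. -/
def Lam.InStep (lev : LCtx O ar → ℕ) (Red : Lam O ar → Prop)
    (root : Lam O ar → Lam O ar → Prop) (t s : Lam O ar) : Prop :=
  ∃ k : ℕ, Lam.StepAt lev root k t s ∧ Lam.ll lev Red t < (k : ℕ∞)

/-- Contextual closure of a root rule on bang-terms. -/
def BT.Step (root : BT O ar → BT O ar → Prop) (t s : BT O ar) : Prop :=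
  ∃ (c : BCtx O ar) (a b : BT O ar), root a b ∧ t = c.plug a ∧ s = c.plug b

/-- Step at level `k` in the bang calculus. -/
def BT.StepAt (root : BT O ar → BT O ar → Prop) (k : ℕ) (t s : BT O ar) : Prop :=
  ∃ (c : BCtx O ar) (a b : BT O ar), root a b ∧ t = c.plug a ∧ s = c.plug b ∧ c.lev = k

/-- Least level of a bang-term w.r.t. a redex set `Red`. -/
noncomputable def BT.ll (Red : BT O ar → Prop) (t : BT O ar) : ℕ∞ :=
  sInf { n : ℕ∞ | ∃ (c : BCtx O ar) (r : BT O ar), Red r ∧ t = c.plug r ∧ (c.lev : ℕ∞) = n }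

/-- Least-level step in the bang calculus. -/
def BT.LLStep (Red : BT O ar → Prop) (root : BT O ar → BT O ar → Prop)
    (t s : BT O ar) : Prop :=
  ∃ k : ℕ, BT.StepAt root k t s ∧ (k : ℕ∞) = BT.ll Red t

/-- Internal (non-least-level) step in the bang calculus. -/
def BT.InStep (Red : BT O ar → Prop) (root : BT O ar → BT O ar → Prop)
    (t s : BT O ar) : Prop :=
  ∃ k : ℕ, BT.StepAt root k t s ∧ BT.ll Red t < (k : ℕ∞)

/-- β-rule: `(λx.t)s ↦β t[s/x]`. -/
def betaRoot : Lam O ar → Lam O ar → Prop := fun a b =>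
  ∃ x t s, a = Lam.app (Lam.lam x t) s ∧ b = Lam.subst t x s

/-- β-redexes. -/
def betaRedex : Lam O ar → Prop := fun a => ∃ x t s, a = Lam.app (Lam.lam x t) s

/-- βv-rule: `(λx.t)V ↦βv t[V/x]` for `V` a value. -/
def betavRoot : Lam O ar → Lam O ar → Prop := fun a b =>
  ∃ x t v, Lam.isValue v ∧ a = Lam.app (Lam.lam x t) v ∧ b = Lam.subst t x v

/-- βv-redexes. -/
def betavRedex : Lam O ar → Prop := fun a => ∃ x t v, Lam.isValue v ∧ a = Lam.app (Lam.lam x t) v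

/-- !β-rule: `(λx.T)(!S) ↦!β T[S/x]`. -/
def bbetaRoot : BT O ar → BT O ar → Prop := fun a b =>
  ∃ x T S, a = BT.app (BT.lam x T) (BT.bang S) ∧ b = BT.subst T x S

/-- !β-redexes. -/
def bbetaRedex : BT O ar → Prop := fun a => ∃ x T S, a = BT.app (BT.lam x T) (BT.bang S)

/-- `der := λx.x`. -/
def der : BT O ar := BT.lam 0 (BT.var 0)

/-- d-rule: `der(!T) ↦d T`. -/
def dRoot : BT O ar → BT O ar → Prop := fun a b => a = BT.app der (BT.bang b)

/-- CbN translation of λ-terms into the bang calculus. -/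
def cbn : Lam O ar → BT O ar
  | .var x => .var x
  | .lam x t => .lam x (cbn t)
  | .app t s => .app (cbn t) (.bang (cbn s))
  | .op o ts => .op o (fun i => cbn (ts i))

/-- CbV translation of λ-terms into the bang calculus. -/
def cbv : Lam O ar → BT O ar
  | .var x => .bang (.var x)
  | .lam x t => .bang (.lam x (cbv t))
  | .app t s =>
      match cbv t with
      | .bang T => .app T (cbv s)
      | T => .app (.app der T) (cbv s)
  | .op o ts => .op o (fun i => cbv (ts i))

/-- CbN translation of λ-contexts into bang-contexts. -/
def cbnCtx : LCtx O ar → BCtx O ar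
  | .hole => .hole
  | .lam x c => .lam x (cbnCtx c)
  | .appL c t => .appL (cbnCtx c) (.bang (cbn t))
  | .appR t c => .appR (cbn t) (.bang (cbnCtx c))
  | .op o ts i c => .op o (fun j => cbn (ts j)) i (cbnCtx c)

/-- CbV translation of λ-contexts into bang-contexts. -/
def cbvCtx : LCtx O ar → BCtx O ar
  | .hole => .hole
  | .lam x c => .bang (.lam x (cbvCtx c))
  | .appL c t =>
      match cbvCtx c with
      | .bang C => .appL C (cbv t)
      | C => .appL (.appR der C) (cbv t)
  | .appR t c =>
      match cbv t with
      | .bang T => .appR T (cbvCtx c)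
      | T => .appR (.app der T) (cbvCtx c)
  | .op o ts i c => .op o (fun j => cbv (ts j)) i (cbvCtx c)

/-- `a` is `r`-normal: no `r`-step from `a`. -/
def Normal {α : Type*} (r : α → α → Prop) (a : α) : Prop := ∀ b, ¬ r a b

/-- `a` is strongly `r`-normalizing. -/
def SN {α : Type*} (r : α → α → Prop) (a : α) : Prop := Acc (fun x y => r y x) a

/-- `e` is a normalizing strategy for `r`: it has the same normal forms as `r`, and
from every `r`-normalizable term every maximal `e`-sequence ends in a normal form
(i.e. it cannot be extended infinitely). -/
def NormalizingStrategy {α : Type*} (r e : α → α → Prop) : Prop :=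
  (∀ a, Normal e a ↔ Normal r a) ∧
  ∀ t u, Relation.ReflTransGen r t u → Normal r u → SN e t

/-- Redex set of `→!β ∪ →O` for a family of operator rules. -/
def BT.RedSet (rules : O → BT O ar → BT O ar → Prop) : BT O ar → Prop :=
  fun A => bbetaRedex A ∨ ∃ o B, rules o A B

/-- Step at level `k` of the compound reduction `→!β ∪ →O`. -/
def BT.FullAt (rules : O → BT O ar → BT O ar → Prop) (k : ℕ) (T S : BT O ar) : Prop :=
  BT.StepAt bbetaRoot k T S ∨ ∃ o, BT.StepAt (rules o) k T S

/-- The compound reduction `→!β ∪ →O` of the bang calculus. -/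
def BT.Full (rules : O → BT O ar → BT O ar → Prop) (T S : BT O ar) : Prop :=
  ∃ k, BT.FullAt rules k T S

/-- Least-level step of `→!β ∪ →O`. -/
def BT.FullLL (rules : O → BT O ar → BT O ar → Prop) (T S : BT O ar) : Prop :=
  ∃ k : ℕ, BT.FullAt rules k T S ∧ (k : ℕ∞) = BT.ll (BT.RedSet rules) T

/-- Internal step of `→!β ∪ →O`. -/
def BT.FullIn (rules : O → BT O ar → BT O ar → Prop) (T S : BT O ar) : Prop :=
  ∃ k : ℕ, BT.FullAt rules k T S ∧ BT.ll (BT.RedSet rules) T < (k : ℕ∞)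

/-- Redex set of `→base ∪ →O` on λ-terms. -/
def Lam.RedSet (base : Lam O ar → Prop) (rules : O → Lam O ar → Lam O ar → Prop) :
    Lam O ar → Prop :=
  fun a => base a ∨ ∃ o b, rules o a b

/-- Step at level `k` of the compound reduction `→root ∪ →O` on λ-terms. -/
def Lam.FullAt (lev : LCtx O ar → ℕ) (root : Lam O ar → Lam O ar → Prop)
    (rules : O → Lam O ar → Lam O ar → Prop) (k : ℕ) (t s : Lam O ar) : Prop :=
  Lam.StepAt lev root k t s ∨ ∃ o, Lam.StepAt lev (rules o) k t s

/-- Compound reduction `→root ∪ →O` on λ-terms. -/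
def Lam.Full (lev : LCtx O ar → ℕ) (root : Lam O ar → Lam O ar → Prop)
    (rules : O → Lam O ar → Lam O ar → Prop) (t s : Lam O ar) : Prop :=
  ∃ k, Lam.FullAt lev root rules k t s

/-- Least-level step of the compound reduction on λ-terms. -/
def Lam.FullLL (lev : LCtx O ar → ℕ) (base : Lam O ar → Prop)
    (root : Lam O ar → Lam O ar → Prop)
    (rules : O → Lam O ar → Lam O ar → Prop) (t s : Lam O ar) : Prop :=
  ∃ k : ℕ, Lam.FullAt lev root rules k t s ∧ (k : ℕ∞) = Lam.ll lev (Lam.RedSet base rules) t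

/-- Internal step of the compound reduction on λ-terms. -/
def Lam.FullIn (lev : LCtx O ar → ℕ) (base : Lam O ar → Prop)
    (root : Lam O ar → Lam O ar → Prop)
    (rules : O → Lam O ar → Lam O ar → Prop) (t s : Lam O ar) : Prop :=
  ∃ k : ℕ, Lam.FullAt lev root rules k t s ∧ Lam.ll lev (Lam.RedSet base rules) t < (k : ℕ∞)

/-!
Plugging commutes with the translation, `cbv (c⟨b⟩) = (cbvCtx c)⟨cbv b⟩`, except when the hole
of `c` is in function position and `b` is a value: then `(cbvCtx c)⟨cbv b⟩` contains one
administrative redex `der (!·)` at the hole, at level `levV c`, whose contraction gives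
`cbv (c⟨b⟩)`. Conversely, a `!β`- or operator redex of `cbv t` always sits at the image of a
redex position of `t`, at the same level. The optional `d`-step is uniquely determined:
`d`-steps preserve the `d`-normal form `dNF`, which fixes every translated term, and `cbv` is
injective.
-/

def BCtx.comp : BCtx O ar → BCtx O ar → BCtx O ar
  | .hole, D => D
  | .lam x C, D => .lam x (C.comp D)
  | .appL C S, D => .appL (C.comp D) S
  | .appR T C, D => .appR T (C.comp D)
  | .bang C, D => .bang (C.comp D)
  | .op o Ts i C, D => .op o Ts i (C.comp D)

theorem BCtx.plug_comp (C D : BCtx O ar) (X : BT O ar) :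
    (C.comp D).plug X = C.plug (D.plug X) := by
  induction C <;> simp [comp, plug, *]

theorem BCtx.lev_comp (C D : BCtx O ar) : (C.comp D).lev = D.lev + C.lev := by
  induction C <;> simp [comp, lev, *] <;> omega

theorem BCtx.plug_ne_var {A : BT O ar} (hA : ∀ y, A ≠ .var y) (C : BCtx O ar) (y : ℕ) :
    C.plug A ≠ .var y := by
  cases C <;> simp [plug, hA]

theorem BT.StepAt.plug {r : BT O ar → BT O ar → Prop} {k k' : ℕ} {T U : BT O ar}
    (h : BT.StepAt r k T U) (C : BCtx O ar) (hk : k + C.lev = k') :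
    BT.StepAt r k' (C.plug T) (C.plug U) := by
  obtain ⟨D, A, B, hAB, rfl, rfl, rfl⟩ := h
  exact ⟨C.comp D, A, B, hAB, (C.plug_comp D A).symm, (C.plug_comp D B).symm,
    by rw [C.lev_comp, hk]⟩

theorem BT.eq_or_stepAt_plug {r : BT O ar → BT O ar → Prop} {k k' : ℕ} {T U : BT O ar}
    (C : BCtx O ar) (h : T = U ∨ BT.StepAt r k T U) (hk : k + C.lev = k') :
    C.plug T = C.plug U ∨ BT.StepAt r k' (C.plug T) (C.plug U) :=
  h.imp (congrArg C.plug) (·.plug C hk)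

abbrev BT.IsBbetaRedexOrOp (A : BT O ar) : Prop := bbetaRedex A ∨ ∃ o Ts, A = .op o Ts

theorem BT.IsBbetaRedexOrOp.ne_var {A : BT O ar} (hA : A.IsBbetaRedexOrOp) (y : ℕ) :
    A ≠ .var y := by
  rcases hA with ⟨_, _, _, rfl⟩ | ⟨_, _, rfl⟩ <;> simp

theorem BT.IsBbetaRedexOrOp.ne_lam {A : BT O ar} (hA : A.IsBbetaRedexOrOp) (x : ℕ)
    (T : BT O ar) : A ≠ .lam x T := by
  rcases hA with ⟨_, _, _, rfl⟩ | ⟨_, _, rfl⟩ <;> simp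

/-- Inverting `cbv t = C⟨A⟩` recovers `C` only up to this relation, since the argument of an
operator context that contains the hole is never read. -/
def BCtx.Equiv (C D : BCtx O ar) : Prop := C.lev = D.lev ∧ ∀ X, C.plug X = D.plug X

theorem BCtx.Equiv.refl (C : BCtx O ar) : C.Equiv C := ⟨rfl, fun _ => rfl⟩

theorem BCtx.Equiv.symm {C D : BCtx O ar} (h : C.Equiv D) : D.Equiv C :=
  ⟨h.1.symm, fun X => (h.2 X).symm⟩

theorem BCtx.Equiv.eq_bang {C₁ D : BCtx O ar} (h : (BCtx.bang C₁).Equiv D) :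
    ∃ D₁, D = .bang D₁ ∧ C₁.Equiv D₁ := by
  obtain ⟨hlev, hplug⟩ := h
  cases D with
  | bang D₁ =>
    exact ⟨D₁, rfl, by simpa [lev] using hlev, fun X => by simpa [plug] using hplug X⟩
  | _ => simpa [plug] using hplug (.var 0)

def dNF : BT O ar → BT O ar
  | .var x => .var x
  | .lam x T => .lam x (dNF T)
  | .app T S =>
      match dNF T, dNF S with
      | .lam 0 (.var 0), .bang X => X
      | T', S' => .app T' S'
  | .bang T => .bang (dNF T)
  | .op o Ts => .op o (fun i => dNF (Ts i))

theorem dNF_app_of_not_redex {T S : BT O ar} (h : dNF T = der → ∀ X, dNF S ≠ .bang X) :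
    dNF (.app T S) = .app (dNF T) (dNF S) := by
  simp only [dNF]
  split
  · simp_all [der]
  · rfl

theorem dNF_plug_congr (C : BCtx O ar) {A B : BT O ar} (h : dNF A = dNF B) :
    dNF (C.plug A) = dNF (C.plug B) := by
  induction C with
  | hole => exact h
  | op o Ts i C ih =>
    simp only [BCtx.plug, dNF]
    congr 1
    funext j
    by_cases hj : j = i
    · subst hj
      simp [ih]
    · simp [hj]
  | _ => simp [BCtx.plug, dNF, *]

theorem dNF_eq_of_eq_or_stepAt {k : ℕ} {T U : BT O ar} (h : T = U ∨ BT.StepAt dRoot k T U) :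
    dNF T = dNF U := by
  rcases h with rfl | ⟨C, A, B, rfl, rfl, rfl, -⟩
  · rfl
  · exact dNF_plug_congr C (by simp [dNF, der])

def cbvApp : BT O ar → BT O ar → BT O ar
  | .bang T, S => .app T S
  | T, S => .app (.app der T) S

def cbvCtxAppL : BCtx O ar → BT O ar → BCtx O ar
  | .bang C, S => .appL C S
  | C, S => .appL (.appR der C) S

def cbvCtxAppR : BT O ar → BCtx O ar → BCtx O ar
  | .bang T, C => .appR T C
  | T, C => .appR (.app der T) C

@[simp] theorem cbvApp_ne_bang (T S W : BT O ar) : cbvApp T S ≠ .bang W := by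
  cases T <;> simp [cbvApp]

@[simp] theorem cbvApp_ne_var (T S : BT O ar) (y : ℕ) : cbvApp T S ≠ .var y := by
  cases T <;> simp [cbvApp]

@[simp] theorem cbvCtxAppL_ne_bang (C C' : BCtx O ar) (S : BT O ar) :
    cbvCtxAppL C S ≠ .bang C' := by
  cases C <;> simp [cbvCtxAppL]

@[simp] theorem cbvCtxAppR_ne_bang (T : BT O ar) (C C' : BCtx O ar) :
    cbvCtxAppR T C ≠ .bang C' := by
  cases T <;> simp [cbvCtxAppR]

theorem cbvApp_of_ne_bang {T : BT O ar} (h : ∀ W, T ≠ .bang W) (S : BT O ar) :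
    cbvApp T S = .app (.app der T) S := by
  cases T <;> simp_all [cbvApp]

theorem cbvCtxAppL_of_ne_bang {C : BCtx O ar} (h : ∀ C', C ≠ .bang C') (S : BT O ar) :
    cbvCtxAppL C S = .appL (.appR der C) S := by
  cases C <;> simp_all [cbvCtxAppL]

theorem cbvCtxAppR_of_ne_bang {T : BT O ar} (h : ∀ W, T ≠ .bang W) (C : BCtx O ar) :
    cbvCtxAppR T C = .appR (.app der T) C := by
  cases T <;> simp_all [cbvCtxAppR]

@[simp] theorem lev_cbvCtxAppR (T : BT O ar) (C : BCtx O ar) :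
    (cbvCtxAppR T C).lev = C.lev := by
  cases T <;> rfl

theorem BCtx.plug_cbvCtxAppR (T : BT O ar) (C : BCtx O ar) (X : BT O ar) :
    (cbvCtxAppR T C).plug X = cbvApp T (C.plug X) := by
  cases T <;> rfl

theorem BCtx.plug_cbvCtxAppL (C : BCtx O ar) (S : BT O ar) {X : BT O ar}
    (hX : ∀ W, X ≠ .bang W) : (cbvCtxAppL C S).plug X = cbvApp (C.plug X) S := by
  cases C with
  | hole => simp [cbvCtxAppL, plug, cbvApp_of_ne_bang hX]
  | _ => rfl

theorem BCtx.Equiv.cbvCtxAppL_congr {C D : BCtx O ar} (h : C.Equiv D) (S : BT O ar) :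
    (cbvCtxAppL C S).Equiv (cbvCtxAppL D S) := by
  by_cases hC : ∀ C₁, C ≠ .bang C₁
  · have hD : ∀ D₁, D ≠ .bang D₁ := by
      rintro D₁ rfl
      obtain ⟨C₁, rfl, -⟩ := h.symm.eq_bang
      exact hC C₁ rfl
    rw [cbvCtxAppL_of_ne_bang hC, cbvCtxAppL_of_ne_bang hD]
    exact ⟨by simpa [lev] using h.1, fun X => by simp [plug, h.2 X]⟩
  · obtain ⟨C₁, rfl⟩ : ∃ C₁, C = .bang C₁ := by simpa using hC
    obtain ⟨D₁, rfl, hlev, hplug⟩ := h.eq_bang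
    exact ⟨by simpa [cbvCtxAppL, lev] using hlev, fun X => by simp [cbvCtxAppL, plug, hplug]⟩

theorem BCtx.Equiv.cbvCtxAppR_congr {C D : BCtx O ar} (h : C.Equiv D) (T : BT O ar) :
    (cbvCtxAppR T C).Equiv (cbvCtxAppR T D) :=
  ⟨by simpa using h.1, fun X => by simp [plug_cbvCtxAppR, h.2 X]⟩

theorem der_subst (x : ℕ) (W : BT O ar) : der.subst x W = der := by
  by_cases h : 0 = x <;> simp [der, BT.subst, h]

theorem cbvApp_subst {T : BT O ar} (hT : ∀ y, T ≠ .var y) (S : BT O ar) (x : ℕ)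
    (W : BT O ar) : (cbvApp T S).subst x W = cbvApp (T.subst x W) (S.subst x W) := by
  cases T with
  | var y => exact absurd rfl (hT y)
  | bang T => rfl
  | lam y T => by_cases h : y = x <;> simp [cbvApp, BT.subst, der_subst, h]
  | _ => simp [cbvApp, BT.subst, der_subst]

theorem dNF_cbvApp {T S : BT O ar} (hT : dNF T = T) (hS : dNF S = S) (hder : T ≠ .bang der) :
    dNF (cbvApp T S) = cbvApp T S := by
  cases T with
  | bang T =>
    simp only [dNF, BT.bang.injEq, ne_eq] at hT hder
    rw [cbvApp, dNF_app_of_not_redex (fun h => absurd (hT ▸ h) hder), hT, hS]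
  | _ => simp_all [cbvApp, der, dNF]

theorem cbvApp_eq_plug {T S A : BT O ar} {C : BCtx O ar} (hA : A.IsBbetaRedexOrOp)
    (h : cbvApp T S = C.plug A) :
    C = .hole ∨ (∃ C', C = cbvCtxAppR T C' ∧ S = C'.plug A) ∨
      ∃ C', C = cbvCtxAppL C' S ∧ T = C'.plug A := by
  by_cases hT : ∀ W, T ≠ .bang W
  · rw [cbvApp_of_ne_bang hT] at h
    cases C with
    | hole => exact .inl rfl
    | appR T' C' =>
      simp only [BCtx.plug, BT.app.injEq] at h
      obtain ⟨rfl, hS⟩ := h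
      exact .inr (.inl ⟨C', (cbvCtxAppR_of_ne_bang hT C').symm, hS⟩)
    | appL C₁ S' =>
      simp only [BCtx.plug, BT.app.injEq] at h
      obtain ⟨h₁, rfl⟩ := h
      cases C₁ with
      | hole => rcases hA with ⟨_, _, _, rfl⟩ | ⟨_, _, rfl⟩ <;> simp_all [BCtx.plug, der]
      | appL C₂ _ =>
        simp only [BCtx.plug, BT.app.injEq, der] at h₁
        exfalso
        cases C₂ with
        | hole => exact hA.ne_lam 0 _ h₁.1.symm
        | lam _ C₃ =>
          simp only [BCtx.plug, BT.lam.injEq] at h₁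
          exact BCtx.plug_ne_var hA.ne_var C₃ 0 h₁.1.2.symm
        | _ => simp [BCtx.plug] at h₁
      | appR _ C₂ =>
        simp only [BCtx.plug, BT.app.injEq] at h₁
        obtain ⟨rfl, rfl⟩ := h₁
        have hC₂ : ∀ C₃, C₂ ≠ .bang C₃ := by
          rintro C₃ rfl
          exact hT _ rfl
        exact .inr (.inr ⟨C₂, (cbvCtxAppL_of_ne_bang hC₂ S).symm, rfl⟩)
      | _ => simp [BCtx.plug] at h₁
    | _ => simp [BCtx.plug] at h
  · obtain ⟨W, rfl⟩ : ∃ W, T = .bang W := by simpa using hT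
    simp only [cbvApp] at h
    cases C with
    | hole => exact .inl rfl
    | appR T' C' =>
      simp only [BCtx.plug, BT.app.injEq] at h
      obtain ⟨rfl, hS⟩ := h
      exact .inr (.inl ⟨C', rfl, hS⟩)
    | appL C₁ S' =>
      simp only [BCtx.plug, BT.app.injEq] at h
      obtain ⟨hW, rfl⟩ := h
      exact .inr (.inr ⟨.bang C₁, rfl, by rw [hW]; rfl⟩)
    | _ => simp [BCtx.plug] at h

@[simp] theorem cbv_var (x : ℕ) : cbv (.var x : Lam O ar) = .bang (.var x) := rfl

@[simp] theorem cbv_lam (x : ℕ) (t : Lam O ar) : cbv (.lam x t) = .bang (.lam x (cbv t)) :=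
  rfl

@[simp] theorem cbv_app (t s : Lam O ar) : cbv (.app t s) = cbvApp (cbv t) (cbv s) := by
  simp only [cbv]
  split <;> simp_all [cbvApp]

@[simp] theorem cbv_op (o : O) (ts : Fin (ar o) → Lam O ar) :
    cbv (.op o ts) = .op o (fun i => cbv (ts i)) := rfl

@[simp] theorem cbvCtx_hole : cbvCtx (.hole : LCtx O ar) = .hole := rfl

@[simp] theorem cbvCtx_lam (x : ℕ) (c : LCtx O ar) :
    cbvCtx (.lam x c) = .bang (.lam x (cbvCtx c)) := rfl

@[simp] theorem cbvCtx_appL (c : LCtx O ar) (t : Lam O ar) :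
    cbvCtx (.appL c t) = cbvCtxAppL (cbvCtx c) (cbv t) := by
  simp only [cbvCtx]
  split <;> simp_all [cbvCtxAppL]

@[simp] theorem cbvCtx_appR (t : Lam O ar) (c : LCtx O ar) :
    cbvCtx (.appR t c) = cbvCtxAppR (cbv t) (cbvCtx c) := by
  simp only [cbvCtx]
  split <;> simp_all [cbvCtxAppR]

@[simp] theorem cbvCtx_op (o : O) (ts : Fin (ar o) → Lam O ar) (i : Fin (ar o))
    (c : LCtx O ar) : cbvCtx (.op o ts i c) = .op o (fun j => cbv (ts j)) i (cbvCtx c) := rfl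

theorem cbv_update {n : ℕ} (ts : Fin n → Lam O ar) (i : Fin n) (s : Lam O ar) :
    (fun j => cbv (Function.update ts i s j)) =
      Function.update (fun j => cbv (ts j)) i (cbv s) := by
  funext j
  exact Function.apply_update (fun _ => cbv) ts i s j

theorem Lam.isValue_iff_exists_cbv_eq_bang {t : Lam O ar} :
    t.isValue ↔ ∃ W, cbv t = .bang W := by
  cases t <;> simp [Lam.isValue]

theorem cbv_ne_var (t : Lam O ar) (y : ℕ) : cbv t ≠ .var y := by
  cases t <;> simp

theorem cbv_ne_bang_der (t : Lam O ar) : cbv t ≠ .bang der := by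
  cases t <;> simp [der, cbv_ne_var]

theorem levV_eq_lev_cbvCtx (c : LCtx O ar) : c.levV = (cbvCtx c).lev := by
  induction c with
  | hole => rfl
  | lam x c ih => simp [LCtx.levV, BCtx.lev, ih]
  | appL c t ih =>
    cases c with
    | lam x c =>
      simp [LCtx.levV, cbvCtxAppL, BCtx.lev] at ih ⊢
      omega
    | _ => simp_all [LCtx.levV, cbvCtxAppL_of_ne_bang, BCtx.lev]
  | appR t c ih => simp [LCtx.levV, ih]
  | op o ts i c ih => simp [LCtx.levV, BCtx.lev, ih]

def uncbv : BT O ar → Lam O ar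
  | .bang (.var x) => .var x
  | .bang (.lam x T) => .lam x (uncbv T)
  | .app (.app (.lam 0 (.var 0)) T) S => .app (uncbv T) (uncbv S)
  | .app (.var x) S => .app (.var x) (uncbv S)
  | .app (.lam x T) S => .app (.lam x (uncbv T)) (uncbv S)
  | .op o Ts => .op o (fun i => uncbv (Ts i))
  | _ => .var 0

theorem uncbv_cbv (t : Lam O ar) : uncbv (cbv t) = t := by
  induction t with
  | var x => rfl
  | lam x t ih => simp [uncbv, ih]
  | op o ts ih => simp [uncbv, ih]
  | app t s iht ihs =>
    cases t with
    | var y => simp [cbvApp, uncbv, ihs]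
    | lam x t => simp_all [cbvApp, uncbv]
    | _ => simp_all [cbvApp_of_ne_bang, uncbv, der]

theorem cbv_injective : Function.Injective (cbv : Lam O ar → BT O ar) :=
  Function.LeftInverse.injective uncbv_cbv

theorem cbv_subst (t : Lam O ar) (x : ℕ) {v : Lam O ar} {W : BT O ar}
    (hv : cbv v = .bang W) : cbv (t.subst x v) = (cbv t).subst x W := by
  induction t with
  | var y => by_cases h : y = x <;> simp [Lam.subst, BT.subst, h, hv]
  | lam y t ih => by_cases h : y = x <;> simp [Lam.subst, BT.subst, h, ih]
  | app t s iht ihs => simp [Lam.subst, iht, ihs, cbvApp_subst (cbv_ne_var t)]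
  | op o ts ih => simp [Lam.subst, BT.subst, ih]

theorem dNF_cbv (t : Lam O ar) : dNF (cbv t) = cbv t := by
  induction t with
  | var x => rfl
  | lam x t ih => simp [dNF, ih]
  | app t s iht ihs => simp [dNF_cbvApp, iht, ihs, cbv_ne_bang_der]
  | op o ts ih => simp [dNF, ih]

theorem eq_of_eq_or_dStep_cbv {k k' : ℕ} {U : BT O ar} {u w : Lam O ar}
    (hu : U = cbv u ∨ BT.StepAt dRoot k U (cbv u))
    (hw : U = cbv w ∨ BT.StepAt dRoot k' U (cbv w)) : u = w := by
  apply cbv_injective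
  rw [← dNF_cbv u, ← dNF_cbv w, ← dNF_eq_of_eq_or_stepAt hu, dNF_eq_of_eq_or_stepAt hw]

theorem cbv_plug_of_not_isValue (c : LCtx O ar) {b : Lam O ar} (hb : ¬ b.isValue) :
    cbv (c.plug b) = (cbvCtx c).plug (cbv b) := by
  have hb' : ∀ W, cbv b ≠ .bang W := by simpa [Lam.isValue_iff_exists_cbv_eq_bang] using hb
  induction c with
  | hole => rfl
  | lam x c ih => simp [LCtx.plug, BCtx.plug, ih]
  | appL c t ih => simp [LCtx.plug, BCtx.plug_cbvCtxAppL _ _ hb', ih]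
  | appR t c ih => simp [LCtx.plug, BCtx.plug_cbvCtxAppR, ih]
  | op o ts i c ih => simp [LCtx.plug, BCtx.plug, cbv_update, ih]

theorem cbvCtx_plug_cbv_of_eq_bang {b : Lam O ar} {W : BT O ar} (hW : cbv b = .bang W) :
    ∀ c : LCtx O ar, (cbvCtx c).plug (cbv b) = cbv (c.plug b) ∨
      BT.StepAt dRoot c.levV ((cbvCtx c).plug (cbv b)) (cbv (c.plug b))
  | .hole => .inl rfl
  | .lam x c =>
    BT.eq_or_stepAt_plug (.bang (.lam x .hole)) (cbvCtx_plug_cbv_of_eq_bang hW c) rfl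
  | .appR t c => by
    simpa [LCtx.plug, BCtx.plug, BCtx.plug_cbvCtxAppR] using
      BT.eq_or_stepAt_plug (cbvCtxAppR (cbv t) .hole) (cbvCtx_plug_cbv_of_eq_bang hW c)
        (k' := (LCtx.appR t c).levV) (by simp [BCtx.lev, LCtx.levV])
  | .op o ts i c => by
    simpa [LCtx.plug, BCtx.plug, cbv_update] using
      BT.eq_or_stepAt_plug (.op o (fun j => cbv (ts j)) i .hole)
        (cbvCtx_plug_cbv_of_eq_bang hW c) (k' := (LCtx.op o ts i c).levV) rfl
  | .appL c t => by
    have ih := cbvCtx_plug_cbv_of_eq_bang hW c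
    cases c with
    | hole =>
      refine .inr ⟨.appL .hole (cbv t), _, W, rfl, ?_, ?_, rfl⟩ <;>
        simp [hW, BCtx.plug, LCtx.plug, cbvCtxAppL, cbvApp]
    | lam x c =>
      exact BT.eq_or_stepAt_plug (.appL (.lam x .hole) (cbv t))
        (cbvCtx_plug_cbv_of_eq_bang hW c) rfl
    | _ =>
      simpa [LCtx.plug, BCtx.plug, LCtx.levV, BCtx.lev, cbvCtxAppL_of_ne_bang,
        cbvApp_of_ne_bang] using BT.eq_or_stepAt_plug (.appL (.appR der .hole) (cbv t)) ih rfl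

theorem cbvCtx_plug_cbv (c : LCtx O ar) (b : Lam O ar) :
    (cbvCtx c).plug (cbv b) = cbv (c.plug b) ∨
      BT.StepAt dRoot c.levV ((cbvCtx c).plug (cbv b)) (cbv (c.plug b)) := by
  by_cases hb : b.isValue
  · obtain ⟨W, hW⟩ := Lam.isValue_iff_exists_cbv_eq_bang.mp hb
    exact cbvCtx_plug_cbv_of_eq_bang hW c
  · exact .inl (cbv_plug_of_not_isValue c hb).symm

theorem exists_eq_plug_of_cbv_eq_plug {A : BT O ar} (hA : A.IsBbetaRedexOrOp)
    (t : Lam O ar) {C : BCtx O ar} (h : cbv t = C.plug A) :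
    ∃ c a, t = c.plug a ∧ A = cbv a ∧ C.Equiv (cbvCtx c) := by
  induction t generalizing C with
  | var x =>
    cases C with
    | hole => exact ⟨.hole, _, rfl, h.symm, .refl _⟩
    | bang C' =>
      simp only [cbv_var, BCtx.plug, BT.bang.injEq] at h
      exact absurd h.symm (BCtx.plug_ne_var hA.ne_var C' x)
    | _ => simp [BCtx.plug] at h
  | lam x t ih =>
    cases C with
    | hole => exact ⟨.hole, _, rfl, h.symm, .refl _⟩
    | bang C' =>
      cases C' with
      | hole => exact absurd h.symm (by simpa [BCtx.plug] using hA.ne_lam x (cbv t))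
      | lam x' C'' =>
        simp only [cbv_lam, BCtx.plug, BT.bang.injEq, BT.lam.injEq] at h
        obtain ⟨rfl, h⟩ := h
        obtain ⟨c, a, rfl, rfl, hlev, hplug⟩ := ih h
        exact ⟨.lam x c, a, rfl, rfl, by simp [BCtx.lev, hlev],
          fun X => by simp [BCtx.plug, hplug]⟩
      | _ => simp [BCtx.plug] at h
    | _ => simp [BCtx.plug] at h
  | op o ts ih =>
    cases C with
    | hole => exact ⟨.hole, _, rfl, h.symm, .refl _⟩
    | op o' Ts j C' =>
      simp only [cbv_op, BCtx.plug, BT.op.injEq] at h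
      obtain ⟨rfl, h⟩ := h
      have hts := eq_of_heq h
      obtain ⟨c, a, hc, rfl, hlev, hplug⟩ := ih j (by simpa using congrFun hts j)
      refine ⟨.op o ts j c, a, ?_, rfl, by simp [BCtx.lev, hlev], fun X => ?_⟩
      · simp [LCtx.plug, ← hc]
      · simp [BCtx.plug, hts, hplug]
    | _ => simp [BCtx.plug] at h
  | app t s iht ihs =>
    rw [cbv_app] at h
    rcases cbvApp_eq_plug hA h with rfl | ⟨C', rfl, hs⟩ | ⟨C', rfl, ht⟩
    · exact ⟨.hole, _, rfl, by rw [cbv_app, h]; rfl, .refl _⟩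
    · obtain ⟨c, a, rfl, rfl, hc⟩ := ihs hs
      exact ⟨.appR t c, a, rfl, rfl, by simpa using hc.cbvCtxAppR_congr (cbv t)⟩
    · obtain ⟨c, a, rfl, rfl, hc⟩ := iht ht
      exact ⟨.appL c s, a, rfl, rfl, by simpa using hc.cbvCtxAppL_congr (cbv s)⟩

theorem stepAt_iff_cbv {r : Lam O ar → Lam O ar → Prop} {R : BT O ar → BT O ar → Prop}
    (hval : ∀ a b, r a b → ¬ a.isValue)
    (hsound : ∀ a b, r a b → R (cbv a) (cbv b))
    (hshape : ∀ A B, R A B → A.IsBbetaRedexOrOp)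
    (hcomplete : ∀ a B, R (cbv a) B → ∃ b, B = cbv b ∧ r a b) (t u : Lam O ar) (k : ℕ) :
    Lam.StepAt LCtx.levV r k t u ↔
      ∃ U, BT.StepAt R k (cbv t) U ∧ (U = cbv u ∨ BT.StepAt dRoot k U (cbv u)) := by
  constructor
  · rintro ⟨c, a, b, hab, rfl, rfl, rfl⟩
    exact ⟨_, ⟨cbvCtx c, cbv a, cbv b, hsound a b hab, cbv_plug_of_not_isValue c (hval a b hab),
      rfl, (levV_eq_lev_cbvCtx c).symm⟩, cbvCtx_plug_cbv c b⟩
  · rintro ⟨U, ⟨C, A, B, hAB, ht, rfl, rfl⟩, hU⟩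
    obtain ⟨c, a, rfl, rfl, hlev, hplug⟩ := exists_eq_plug_of_cbv_eq_plug (hshape _ _ hAB) t ht
    obtain ⟨b, rfl, hab⟩ := hcomplete a _ hAB
    rw [hplug] at hU
    exact ⟨c, a, b, hab, rfl, eq_of_eq_or_dStep_cbv hU (cbvCtx_plug_cbv c b),
      by rw [hlev, levV_eq_lev_cbvCtx]⟩

theorem ll_eq_ll_cbv {P : Lam O ar → Prop} {Q : BT O ar → Prop}
    (hval : ∀ a, P a → ¬ a.isValue)
    (hsound : ∀ a, P a → Q (cbv a))
    (hshape : ∀ A, Q A → A.IsBbetaRedexOrOp)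
    (hcomplete : ∀ a, Q (cbv a) → P a) (t : Lam O ar) :
    Lam.ll LCtx.levV P t = BT.ll Q (cbv t) := by
  unfold Lam.ll BT.ll
  congr 1
  ext n
  constructor
  · rintro ⟨c, a, ha, rfl, rfl⟩
    exact ⟨cbvCtx c, cbv a, hsound a ha, cbv_plug_of_not_isValue c (hval a ha),
      by rw [levV_eq_lev_cbvCtx]⟩
  · rintro ⟨C, A, hA, ht, rfl⟩
    obtain ⟨c, a, rfl, rfl, hlev, -⟩ := exists_eq_plug_of_cbv_eq_plug (hshape A hA) t ht
    exact ⟨c, a, hcomplete a hA, rfl, by rw [hlev, levV_eq_lev_cbvCtx]⟩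

theorem cbv_eq_bbetaRedex {a : Lam O ar} {x : ℕ} {T S : BT O ar}
    (h : cbv a = .app (.lam x T) (.bang S)) :
    ∃ t v, a = .app (.lam x t) v ∧ T = cbv t ∧ cbv v = .bang S := by
  cases a with
  | app a₁ a₂ =>
    cases a₁ with
    | lam y t =>
      simp only [cbv_app, cbv_lam, cbvApp, BT.app.injEq, BT.lam.injEq] at h
      obtain ⟨⟨rfl, rfl⟩, hv⟩ := h
      exact ⟨t, a₂, rfl, rfl, hv⟩
    | var y => simp [cbvApp] at h
    | _ => simp [cbvApp_of_ne_bang, der] at h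
  | _ => simp at h

theorem bbetaRoot_cbv_of_betavRoot {a b : Lam O ar} (h : betavRoot a b) :
    bbetaRoot (cbv a) (cbv b) := by
  obtain ⟨x, t, v, hv, rfl, rfl⟩ := h
  obtain ⟨W, hW⟩ := Lam.isValue_iff_exists_cbv_eq_bang.mp hv
  exact ⟨x, cbv t, W, by simp [cbvApp, hW], cbv_subst t x hW⟩

theorem betavRoot_of_bbetaRoot_cbv {a : Lam O ar} {B : BT O ar} (h : bbetaRoot (cbv a) B) :
    ∃ b, B = cbv b ∧ betavRoot a b := by
  obtain ⟨x, T, S, ha, rfl⟩ := h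
  obtain ⟨t, v, rfl, rfl, hv⟩ := cbv_eq_bbetaRedex ha
  exact ⟨t.subst x v, (cbv_subst t x hv).symm, x, t, v,
    Lam.isValue_iff_exists_cbv_eq_bang.mpr ⟨S, hv⟩, rfl, rfl⟩

theorem bbetaRedex_cbv_iff {a : Lam O ar} : bbetaRedex (cbv a) ↔ betavRedex a := by
  constructor
  · rintro ⟨x, T, S, h⟩
    obtain ⟨t, v, rfl, -, hv⟩ := cbv_eq_bbetaRedex h
    exact ⟨x, t, v, Lam.isValue_iff_exists_cbv_eq_bang.mpr ⟨S, hv⟩, rfl⟩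
  · rintro ⟨x, t, v, hv, rfl⟩
    obtain ⟨_, _, _, h, -⟩ := bbetaRoot_cbv_of_betavRoot ⟨x, t, v, hv, rfl, rfl⟩
    exact ⟨_, _, _, h⟩

/-- Preservation of level via the CbV translation: (1) for contexts,
(2) for reductions at each level `k` (`βv` at level `k` corresponds to `!β` at
level `k` followed by an optional d-step at level `k`, and similarly for each
operator rule), (3) for the least level of a term, where the least levels are
taken w.r.t. the sets of βv- and o-redexes on λ-terms, resp. !β- and o-redexes
on bang-terms. The family of operator rules is given both on λ-terms
(`lamRule`) and on bang-terms (`bangRule`, the corresponding rules), with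
left-hand sides of shape `o(...)`, corresponding to each other under the
CbV translation. -/
theorem cbv_level_preservation {O : Type} {ar : O → ℕ}
    (lamRule : O → Lam O ar → Lam O ar → Prop)
    (bangRule : O → BT O ar → BT O ar → Prop)
    (hshapeL : ∀ o a b, lamRule o a b → ∃ ts, a = Lam.op o ts)
    (hshapeB : ∀ o a b, bangRule o a b → ∃ Ts, a = BT.op o Ts)
    (hsound : ∀ o a b, lamRule o a b → bangRule o (cbv a) (cbv b))
    (hcomplete : ∀ o a S, bangRule o (cbv a) S → ∃ b, S = cbv b ∧ lamRule o a b) :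
    -- (1) for contexts
    (∀ c : LCtx O ar, LCtx.levV c = BCtx.lev (cbvCtx c)) ∧
    -- (2) for reduction
    (∀ (t u : Lam O ar) (k : ℕ),
      (Lam.StepAt LCtx.levV betavRoot k t u ↔
        ∃ U, BT.StepAt bbetaRoot k (cbv t) U ∧
          (U = cbv u ∨ BT.StepAt dRoot k U (cbv u))) ∧
      (∀ o, Lam.StepAt LCtx.levV (lamRule o) k t u ↔
        ∃ U, BT.StepAt (bangRule o) k (cbv t) U ∧
          (U = cbv u ∨ BT.StepAt dRoot k U (cbv u)))) ∧
    -- (3) for least levels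
    (∀ t : Lam O ar,
      Lam.ll LCtx.levV (Lam.RedSet betavRedex lamRule) t
        = BT.ll (BT.RedSet bangRule) (cbv t)) := by
  have hval : ∀ o a b, lamRule o a b → ¬ a.isValue := fun o a b h => by
    obtain ⟨ts, rfl⟩ := hshapeL o a b h
    simp [Lam.isValue]
  have hshape : ∀ o A B, bangRule o A B → A.IsBbetaRedexOrOp :=
    fun o A B h => .inr ⟨o, hshapeB o A B h⟩
  refine ⟨levV_eq_lev_cbvCtx, fun t u k => ⟨?_, fun o => ?_⟩, ll_eq_ll_cbv ?_ ?_ ?_ ?_⟩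
  · exact stepAt_iff_cbv (fun a b ⟨_, _, _, _, ha, _⟩ => by simp [ha, Lam.isValue])
      (fun _ _ => bbetaRoot_cbv_of_betavRoot) (fun A B ⟨x, T, S, hA, _⟩ => .inl ⟨x, T, S, hA⟩)
      (fun _ _ => betavRoot_of_bbetaRoot_cbv) t u k
  · exact stepAt_iff_cbv (hval o) (hsound o) (hshape o) (hcomplete o) t u k
  · rintro a (⟨_, _, _, -, rfl⟩ | ⟨o, b, h⟩)
    exacts [by simp [Lam.isValue], hval o a b h]
  · rintro a (h | ⟨o, b, h⟩)
    exacts [.inl (bbetaRedex_cbv_iff.mpr h), .inr ⟨o, _, hsound o a b h⟩]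
  · rintro A (h | ⟨o, B, h⟩)
    exacts [.inl h, hshape o A B h]
  · rintro a (h | ⟨o, B, h⟩)
    · exact .inl (bbetaRedex_cbv_iff.mp h)
    · obtain ⟨b, -, hb⟩ := hcomplete o a B h
      exact .inr ⟨o, b, hb⟩

end BangPaper
end

section
/- Good least-level of bang calculi: in Λ!O, let → = →!β ∪ →O, where each o ∈ O has redexes of shape o(P1,…,Pk). Then → has a good least-level: it is monotone (T → S implies ℓℓ(T) ≤ ℓℓ(S)) and internally invariant (T ¬ll→ S implies ℓℓ(T) = ℓℓ(S)). -/
/-! Under the hypotheses on the operator rules, the redexes are exactly the `!β`-redexes and the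
operator terms, so the least level is computed by the structural recursion `BT.llRec`. For a
context `C`, let `C.llOut` be the least level of the redexes fixed by `C` alone; then for every
term `T`, `min C.llOut C.lev ≤ llRec C⟨T⟩ ≤ min C.llOut (C.lev + llRec T)`. Contracting a redex
`R` (so `llRec R = 0`) in `C` thus starts from exactly `min C.llOut C.lev`, and the result
cannot go below it: monotonicity. If the step is internal, that minimum is `C.llOut`, which
bounds the result from above as well: internal invariance. -/

namespace BangPaper

variable {O : Type} {ar : O → ℕ}

namespace BT

noncomputable def appRootLl : BT O ar → BT O ar → ℕ∞
  | .lam _ _, .bang _ => 0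
  | _, _ => ⊤

noncomputable def llRec : BT O ar → ℕ∞
  | .var _ => ⊤
  | .lam _ T => T.llRec
  | .app T S => min (appRootLl T S) (min T.llRec S.llRec)
  | .bang T => T.llRec + 1
  | .op _ _ => 0

end BT

namespace BCtx

noncomputable def appLRootLl : BCtx O ar → BT O ar → ℕ∞
  | .lam _ _, .bang _ => 0
  | _, _ => ⊤

noncomputable def appRRootLl : BT O ar → BCtx O ar → ℕ∞
  | .lam _ _, .bang _ => 0
  | _, _ => ⊤

/-- The least level of the redexes of `C⟨T⟩` that do not depend on `T`: those neither inside
the hole nor rooted at an application whose function or argument is the hole itself. -/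
noncomputable def llOut : BCtx O ar → ℕ∞
  | .hole => ⊤
  | .lam _ C => C.llOut
  | .appL C S => min (C.appLRootLl S) (min C.llOut S.llRec)
  | .appR S C => min (appRRootLl S C) (min S.llRec C.llOut)
  | .bang C => C.llOut + 1
  | .op _ _ _ _ => 0

theorem appRootLl_plug_left {C : BCtx O ar} (hC : C ≠ .hole) (T S : BT O ar) :
    BT.appRootLl (C.plug T) S = C.appLRootLl S := by
  cases C <;> cases S <;> first | exact absurd rfl hC | rfl

theorem appRootLl_plug_right {C : BCtx O ar} (hC : C ≠ .hole) (T S : BT O ar) :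
    BT.appRootLl S (C.plug T) = appRRootLl S C := by
  cases C <;> cases S <;> first | exact absurd rfl hC | rfl

theorem llRec_plug_le (C : BCtx O ar) (T : BT O ar) :
    (C.plug T).llRec ≤ min C.llOut (C.lev + T.llRec) := by
  induction C with
  | hole => simp [plug, llOut, lev]
  | lam _ C ih => exact ih
  | appL C S ih =>
    by_cases hC : C = .hole
    · subst hC
      simp [plug, llOut, lev, appLRootLl, BT.llRec]
    · simp only [plug, llOut, lev, BT.llRec, appRootLl_plug_left hC] at ih ⊢
      grind
  | appR S C ih =>
    by_cases hC : C = .hole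
    · subst hC
      simp [plug, llOut, lev, appRRootLl, BT.llRec]
    · simp only [plug, llOut, lev, BT.llRec, appRootLl_plug_right hC] at ih ⊢
      grind
  | bang C ih =>
    simp only [plug, llOut, lev, BT.llRec, Nat.cast_add, Nat.cast_one]
    rw [add_right_comm, min_add_add_right]
    gcongr
  | op => exact zero_le

theorem min_llOut_lev_le_llRec_plug (C : BCtx O ar) (T : BT O ar) :
    min C.llOut C.lev ≤ (C.plug T).llRec := by
  induction C with
  | hole => simp [llOut, lev]
  | lam _ C ih => exact ih
  | appL C S ih =>
    by_cases hC : C = .hole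
    · simp [hC, lev]
    · simp only [plug, llOut, lev, BT.llRec, appRootLl_plug_left hC] at ih ⊢
      grind
  | appR S C ih =>
    by_cases hC : C = .hole
    · simp [hC, lev]
    · simp only [plug, llOut, lev, BT.llRec, appRootLl_plug_right hC] at ih ⊢
      grind
  | bang C ih =>
    simp only [plug, llOut, lev, BT.llRec, Nat.cast_add, Nat.cast_one]
    rw [min_add_add_right]
    gcongr
  | op => exact min_le_left _ _

theorem llRec_plug_of_llRec_eq_zero (C : BCtx O ar) {R : BT O ar} (hR : R.llRec = 0) :
    (C.plug R).llRec = min C.llOut C.lev :=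
  le_antisymm (by simpa [hR] using C.llRec_plug_le R) (C.min_llOut_lev_le_llRec_plug R)

theorem llRec_plug_le_llRec_plug (C : BCtx O ar) {R : BT O ar} (hR : R.llRec = 0)
    (S : BT O ar) : (C.plug R).llRec ≤ (C.plug S).llRec := by
  rw [C.llRec_plug_of_llRec_eq_zero hR]
  exact C.min_llOut_lev_le_llRec_plug S

theorem llRec_plug_eq_of_lt_lev (C : BCtx O ar) {R : BT O ar} (hR : R.llRec = 0)
    (S : BT O ar) (h : (C.plug R).llRec < C.lev) : (C.plug R).llRec = (C.plug S).llRec := by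
  rw [C.llRec_plug_of_llRec_eq_zero hR] at h ⊢
  have hout : C.llOut < C.lev := (min_lt_iff.mp h).resolve_right (lt_irrefl _)
  refine le_antisymm (C.min_llOut_lev_le_llRec_plug S) ?_
  rw [min_eq_left hout.le]
  exact (C.llRec_plug_le S).trans (min_le_left _ _)

end BCtx

namespace BT

theorem bbetaRedex_of_appRootLl_ne_top {T S : BT O ar} (h : appRootLl T S ≠ ⊤) :
    bbetaRedex (app T S) := by
  unfold appRootLl at h
  split at h
  · exact ⟨_, _, _, rfl⟩
  · exact absurd rfl h

variable {rules : O → BT O ar → BT O ar → Prop}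

theorem llRec_eq_zero_of_redSet (hshape : ∀ o a b, rules o a b → ∃ Ps, a = BT.op o Ps)
    {R : BT O ar} (hR : RedSet rules R) : R.llRec = 0 := by
  rcases hR with ⟨x, T, S, rfl⟩ | ⟨o, R', hR'⟩
  · simp [llRec, appRootLl]
  · obtain ⟨Ps, rfl⟩ := hshape o R R' hR'
    rfl

theorem exists_plug_of_llRec_eq
    (htotal : ∀ (o : O) (Ps : Fin (ar o) → BT O ar), ∃ b, rules o (BT.op o Ps) b)
    (T : BT O ar) {n : ℕ} (h : T.llRec = n) :
    ∃ (C : BCtx O ar) (R : BT O ar), RedSet rules R ∧ T = C.plug R ∧ C.lev = n := by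
  induction T generalizing n with
  | var => cases h
  | lam x T ih =>
    obtain ⟨C, R, hR, rfl, hC⟩ := ih h
    exact ⟨.lam x C, R, hR, rfl, hC⟩
  | app T S ihT ihS =>
    rcases min_choice (appRootLl T S) (min T.llRec S.llRec) with hm | hm <;>
      rw [llRec, hm] at h
    · obtain ⟨x, T', S', hTS⟩ := bbetaRedex_of_appRootLl_ne_top (h ▸ ENat.natCast_ne_top n)
      cases hTS
      have h0 : (0 : ℕ∞) = n := h
      exact ⟨.hole, _, Or.inl ⟨x, T', S', rfl⟩, rfl, by exact_mod_cast h0⟩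
    · rcases min_choice T.llRec S.llRec with hm | hm <;> rw [hm] at h
      · obtain ⟨C, R, hR, rfl, hC⟩ := ihT h
        exact ⟨.appL C S, R, hR, rfl, hC⟩
      · obtain ⟨C, R, hR, rfl, hC⟩ := ihS h
        exact ⟨.appR T C, R, hR, rfl, hC⟩
  | bang T ih =>
    have hT : T.llRec ≠ ⊤ := by
      rintro hT
      simp [llRec, hT] at h
    obtain ⟨m, hm⟩ := ENat.ne_top_iff_exists.mp hT
    rw [llRec, ← hm] at h
    have hn : m + 1 = n := by exact_mod_cast h
    obtain ⟨C, R, hR, rfl, hC⟩ := ih hm.symm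
    exact ⟨.bang C, R, hR, rfl, by simp [BCtx.lev, hC, hn]⟩
  | op o Ps =>
    obtain ⟨b, hb⟩ := htotal o Ps
    have h0 : (0 : ℕ∞) = n := h
    exact ⟨.hole, _, Or.inr ⟨o, b, hb⟩, rfl, by exact_mod_cast h0⟩

theorem ll_redSet_eq_llRec (hshape : ∀ o a b, rules o a b → ∃ Ps, a = BT.op o Ps)
    (htotal : ∀ (o : O) (Ps : Fin (ar o) → BT O ar), ∃ b, rules o (BT.op o Ps) b)
    (T : BT O ar) : ll (RedSet rules) T = T.llRec := by
  refine le_antisymm ?_ (le_sInf ?_)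
  · cases hT : T.llRec using ENat.recTopCoe with
    | top => exact le_top
    | coe n =>
      obtain ⟨C, R, hR, hTC, hC⟩ := exists_plug_of_llRec_eq htotal T hT
      exact sInf_le ⟨C, R, hR, hTC, congrArg _ hC⟩
  · rintro _ ⟨C, R, hR, rfl, rfl⟩
    have h := C.llRec_plug_le R
    rw [llRec_eq_zero_of_redSet hshape hR, add_zero] at h
    exact h.trans (min_le_right _ _)

theorem FullAt.exists_plug {k : ℕ} {T S : BT O ar} (h : FullAt rules k T S) :
    ∃ (C : BCtx O ar) (R R' : BT O ar),
      RedSet rules R ∧ T = C.plug R ∧ S = C.plug R' ∧ C.lev = k := by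
  rcases h with ⟨C, R, R', ⟨x, P, Q, hR, -⟩, hT, hS, hk⟩ | ⟨o, C, R, R', hR, hT, hS, hk⟩
  · exact ⟨C, R, R', Or.inl ⟨x, P, Q, hR⟩, hT, hS, hk⟩
  · exact ⟨C, R, R', Or.inr ⟨o, R', hR⟩, hT, hS, hk⟩

end BT

/-- Good least-level of bang calculi: for `→ = →!β ∪ →O`, where each `o ∈ O`
has redexes exactly the terms of shape `o(P1,…,Pk)`, the reduction `→` is
monotone (steps cannot decrease the least level) and internally invariant
(internal steps preserve the least level). -/
theorem good_least_level_bang {O : Type} {ar : O → ℕ}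
    (bangRule : O → BT O ar → BT O ar → Prop)
    (hshape : ∀ o a b, bangRule o a b → ∃ Ps, a = BT.op o Ps)
    (htotal : ∀ (o : O) (Ps : Fin (ar o) → BT O ar), ∃ b, bangRule o (BT.op o Ps) b) :
    -- monotonicity
    (∀ T S : BT O ar, BT.Full bangRule T S →
      BT.ll (BT.RedSet bangRule) T ≤ BT.ll (BT.RedSet bangRule) S) ∧
    -- internal invariance
    (∀ T S : BT O ar, BT.FullIn bangRule T S →
      BT.ll (BT.RedSet bangRule) T = BT.ll (BT.RedSet bangRule) S) := by
  have hll := BT.ll_redSet_eq_llRec hshape htotal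
  constructor
  · rintro T S ⟨k, hk⟩
    obtain ⟨C, R, R', hR, rfl, rfl, -⟩ := hk.exists_plug
    rw [hll, hll]
    exact C.llRec_plug_le_llRec_plug (BT.llRec_eq_zero_of_redSet hshape hR) R'
  · rintro T S ⟨k, hk, hlt⟩
    obtain ⟨C, R, R', hR, rfl, rfl, rfl⟩ := hk.exists_plug
    rw [hll] at hlt
    rw [hll, hll]
    exact C.llRec_plug_eq_of_lt_lev (BT.llRec_eq_zero_of_redSet hshape hR) R' hlt

end BangPaper
end
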